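/- arXiv:2303.05931 — 5 statements merged into one kernel-verified Lean document; each statement's English description precedes it below -/
import Mathlib

section
/- Let R be a commutative ring with identity which is not isomorphic to a direct product of two fields (so that the prime ideal sum graph PIS(R) is connected). Then the metric dimension of PIS(R) is finite if and only if R has only finitely many ideals. -/
open scoped Classical

/-- The vertex set of the prime ideal sum graph: nonzero proper ideals of `R`. -/
abbrev PISVertex (R : Type*) [CommRing R] := {I : Ideal R // I ≠ ⊥ ∧ I ≠ ⊤}

/-- The prime ideal sum graph of a commutative ring `R`: vertices are nonzero proper
ideals, and two distinct vertices `I`, `J` are adjacent iff `I + J` is a prime ideal. -/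
def PIS (R : Type*) [CommRing R] : SimpleGraph (PISVertex R) where
  Adj I J := I ≠ J ∧ (I.1 + J.1).IsPrime
  symm := ⟨fun I J h => ⟨h.1.symm, by rw [add_comm]; exact h.2⟩⟩
  loopless := ⟨fun I h => h.1 rfl⟩

/-- A set `S` of vertices is a resolving set if any two distinct vertices not both in `S`
are distinguished by the distance to some vertex of `S`. -/
def IsResolvingSet {V : Type*} (G : SimpleGraph V) (S : Set V) : Prop :=
  ∀ u v : V, u ≠ v → ¬(u ∈ S ∧ v ∈ S) → ∃ w ∈ S, G.dist u w ≠ G.dist v w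

/-- The metric dimension of a graph: the least cardinality of a resolving set. -/
noncomputable def metricDim {V : Type*} (G : SimpleGraph V) : ℕ∞ :=
  ⨅ S : {S : Set V // IsResolvingSet G S}, (S : Set V).encard

universe u

/-!
Every vertex of `PIS R` is adjacent (or equal) to a maximal ideal containing it, and two
distinct maximal ideals `M`, `N` are both adjacent to `M ⊓ N`, which is nonzero because
otherwise the Chinese remainder theorem gives `R ≃+* R ⧸ M × R ⧸ N`. Hence `PIS R` has
diameter at most `4`. In a graph of bounded diameter, a finite resolving set `S` sends the
vertices outside `S` injectively to the finitely many vectors of distances to `S`, so there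
are only finitely many vertices; conversely a finite vertex set resolves the graph itself.
-/

section MetricDimension

variable {V : Type*} {G : SimpleGraph V}

lemma isResolvingSet_univ (G : SimpleGraph V) : IsResolvingSet G Set.univ :=
  fun _ _ _ hmem => absurd ⟨trivial, trivial⟩ hmem

lemma metricDim_ne_top_iff : metricDim G ≠ ⊤ ↔ ∃ S, IsResolvingSet G S ∧ S.Finite := by
  simp only [metricDim, ne_eq, iInf_eq_top, not_forall, Set.encard_eq_top_iff, Set.not_infinite,
    Subtype.exists, exists_prop]

lemma IsResolvingSet.finite_of_dist_le {S : Set V} (hS : IsResolvingSet G S) (hSfin : S.Finite)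
    {D : ℕ} (hD : ∀ u v, G.dist u v ≤ D) : Finite V := by
  have : Finite S := hSfin.to_subtype
  let distances : V → S → Fin (D + 1) := fun v w => ⟨G.dist v w, Nat.lt_succ_of_le (hD v w)⟩
  have hinj : Set.InjOn distances Sᶜ := by
    intro u hu v _ huv
    by_contra hne
    obtain ⟨w, hw, hd⟩ := hS u v hne fun h => hu h.1
    exact hd (congrArg Fin.val (congrFun huv ⟨w, hw⟩))
  have hcompl : Sᶜ.Finite := Set.Finite.of_injOn (Set.mapsTo_univ _ _) hinj Set.finite_univ
  exact Set.finite_univ_iff.1 (by simpa using hSfin.union hcompl)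

end MetricDimension

lemma Ideal.exists_ringEquiv_prod_field_of_inf_eq_bot {R : Type u} [CommRing R]
    {M N : Ideal R} (hM : M.IsMaximal) (hN : N.IsMaximal) (hne : M ≠ N) (hbot : M ⊓ N = ⊥) :
    ∃ (F₁ F₂ : Type u) (_ : Field F₁) (_ : Field F₂), Nonempty (R ≃+* (F₁ × F₂)) := by
  have hcop : IsCoprime M N := Ideal.isCoprime_iff_sup_eq.2 (hM.coprime_of_ne hN hne)
  exact ⟨R ⧸ M, R ⧸ N, Ideal.Quotient.field M, Ideal.Quotient.field N,
    ⟨((RingEquiv.quotientBot R).symm.trans (Ideal.quotEquivOfEq hbot.symm)).trans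
      (Ideal.quotientInfEquivQuotientProd M N hcop)⟩⟩

namespace PIS

variable {R : Type u} [CommRing R]

lemma finite_vertex_iff : Finite (PISVertex R) ↔ Finite (Ideal R) := by
  refine ⟨fun hV => ?_, fun _ => Subtype.finite⟩
  have hproper : {I : Ideal R | I ≠ ⊥ ∧ I ≠ ⊤}.Finite := Set.finite_coe_iff.1 hV
  refine Set.finite_univ_iff.1 ((hproper.union (Set.toFinite {⊥, ⊤})).subset fun I _ => ?_)
  by_cases hI : I = ⊥ ∨ I = ⊤
  · exact Or.inr hI
  · exact Or.inl (not_or.1 hI)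

lemma exists_isMaximal_ge (x : PISVertex R) : ∃ M : PISVertex R, M.1.IsMaximal ∧ x.1 ≤ M.1 := by
  obtain ⟨M, hM, hle⟩ := Ideal.exists_le_maximal x.1 x.2.2
  exact ⟨⟨M, fun hbot => x.2.1 (le_bot_iff.1 (hbot ▸ hle)), hM.ne_top⟩, hM, hle⟩

lemma edist_le_one_of_le_of_isPrime {x y : PISVertex R} (hle : x.1 ≤ y.1) (hy : y.1.IsPrime) :
    (PIS R).edist x y ≤ 1 := by
  rw [SimpleGraph.edist_le_one_iff_adj_or_eq, or_iff_not_imp_right]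
  intro hxy
  refine ⟨hxy, ?_⟩
  rwa [Submodule.add_eq_sup, sup_eq_right.2 hle]

lemma edist_le_two_of_isMaximal
    (h : ¬ ∃ (F₁ F₂ : Type u) (_ : Field F₁) (_ : Field F₂), Nonempty (R ≃+* (F₁ × F₂)))
    {M N : PISVertex R} (hM : M.1.IsMaximal) (hN : N.1.IsMaximal) :
    (PIS R).edist M N ≤ 2 := by
  have hbot : M.1 ⊓ N.1 ≠ ⊥ := by
    by_cases hMN : M.1 = N.1
    · rw [hMN, inf_idem]
      exact N.2.1
    · exact fun hbot => h (Ideal.exists_ringEquiv_prod_field_of_inf_eq_bot hM hN hMN hbot)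
  let K : PISVertex R := ⟨M.1 ⊓ N.1, hbot, ne_top_of_le_ne_top M.2.2 inf_le_left⟩
  calc (PIS R).edist M N ≤ (PIS R).edist M K + (PIS R).edist K N :=
        SimpleGraph.edist_triangle
    _ ≤ 1 + 1 := by
        gcongr
        · rw [SimpleGraph.edist_comm]
          exact edist_le_one_of_le_of_isPrime inf_le_left hM.isPrime
        · exact edist_le_one_of_le_of_isPrime inf_le_right hN.isPrime
    _ = 2 := by norm_num

lemma dist_le_four
    (h : ¬ ∃ (F₁ F₂ : Type u) (_ : Field F₁) (_ : Field F₂), Nonempty (R ≃+* (F₁ × F₂)))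
    (x y : PISVertex R) : (PIS R).dist x y ≤ 4 := by
  obtain ⟨M, hM, hxM⟩ := exists_isMaximal_ge x
  obtain ⟨N, hN, hyN⟩ := exists_isMaximal_ge y
  have hedist : (PIS R).edist x y ≤ 4 :=
    calc (PIS R).edist x y ≤ (PIS R).edist x M + ((PIS R).edist M N + (PIS R).edist N y) :=
          SimpleGraph.edist_triangle.trans (add_le_add_right SimpleGraph.edist_triangle _)
      _ ≤ 1 + (2 + 1) := by
          gcongr
          · exact edist_le_one_of_le_of_isPrime hxM hM.isPrime
          · exact edist_le_two_of_isMaximal h hM hN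
          · rw [SimpleGraph.edist_comm]
            exact edist_le_one_of_le_of_isPrime hyN hN.isPrime
      _ = 4 := by norm_num
  exact ENat.toNat_le_toNat hedist (by simp)

end PIS

/-- For a commutative ring `R` not isomorphic to a direct product of two fields,
the metric dimension of `PIS R` is finite iff `R` has only finitely many ideals. -/
theorem metricDim_PIS_finite_iff {R : Type u} [CommRing R]
    (h : ¬ ∃ (F₁ F₂ : Type u) (_ : Field F₁) (_ : Field F₂), Nonempty (R ≃+* (F₁ × F₂))) :
    metricDim (PIS R) ≠ ⊤ ↔ Finite (Ideal R) := by
  rw [← PIS.finite_vertex_iff, metricDim_ne_top_iff]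
  constructor
  · rintro ⟨S, hS, hSfin⟩
    exact hS.finite_of_dist_le hSfin (PIS.dist_le_four h)
  · intro _
    exact ⟨Set.univ, isResolvingSet_univ _, Set.toFinite _⟩
end

section
/- Let R ≅ F₁ × F₂ × F₃ be a direct product of three fields. Then the metric dimension of the prime ideal sum graph PIS(R) equals 2. -/
/-!
A product of three fields is Artinian, so its prime ideals are its maximal ideals, i.e. the
coatoms of its ideal lattice, and that lattice is the Boolean cube `Bool × Bool × Bool`.
Hence `PIS R` is the graph on the six nontrivial points of the cube in which two points are
adjacent when their join is a coatom. Any two non-adjacent vertices have a common neighbour,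
so all distances are `0`, `1` or `2` and everything left is a finite check: the two maximal
ideals `F₁ × F₂ × 0` and `F₁ × 0 × F₃` resolve the graph, while every vertex has two
neighbours, which it cannot tell apart on its own.
-/

open scoped Classical

open SimpleGraph

namespace SimpleGraph

variable {V V' : Type*} {G : SimpleGraph V} {G' : SimpleGraph V'}

lemma Hom.edist_le (f : G →g G') (u v : V) : G'.edist (f u) (f v) ≤ G.edist u v := by
  by_cases h : G.Reachable u v
  · obtain ⟨p, hp⟩ := h.exists_walk_length_eq_edist
    calc G'.edist (f u) (f v) ≤ (p.map f).length := SimpleGraph.edist_le _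
      _ = G.edist u v := by rw [Walk.length_map, hp]
  · rw [edist_eq_top_of_not_reachable h]
    exact le_top

lemma Iso.edist_eq (f : G ≃g G') (u v : V) : G'.edist (f u) (f v) = G.edist u v :=
  le_antisymm (Hom.edist_le f.toHom u v) <| by
    simpa using Hom.edist_le f.symm.toHom (f u) (f v)

lemma Iso.dist_eq (f : G ≃g G') (u v : V) : G'.dist (f u) (f v) = G.dist u v := by
  simp only [dist, f.edist_eq]

lemma dist_eq_ite_of_forall_exists_common_adj [DecidableEq V] [DecidableRel G.Adj]
    (h : ∀ u v, u ≠ v → ¬G.Adj u v → ∃ w, G.Adj u w ∧ G.Adj w v) (u v : V) :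
    G.dist u v = if u = v then 0 else if G.Adj u v then 1 else 2 := by
  split_ifs with huv hadj
  · rw [huv, dist_self]
  · exact dist_eq_one_iff_adj.mpr hadj
  · obtain ⟨w, huw, hwv⟩ := h u v huv hadj
    have : G.edist u v = 2 :=
      edist_eq_two_iff.mpr ⟨huv, hadj, w, G.mem_commonNeighbors.mpr ⟨huw, hwv.symm⟩⟩
    simp [dist, this]

end SimpleGraph

section MetricDimension

variable {V V' : Type*} {G : SimpleGraph V} {G' : SimpleGraph V'}

lemma IsResolvingSet.image (f : G ≃g G') {S : Set V} (hS : IsResolvingSet G S) :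
    IsResolvingSet G' (f '' S) := by
  rintro u' v' huv hS'
  obtain ⟨u, rfl⟩ := f.surjective u'
  obtain ⟨v, rfl⟩ := f.surjective v'
  obtain ⟨w, hw, hd⟩ := hS u v (fun h => huv (h ▸ rfl)) fun h =>
    hS' ⟨Set.mem_image_of_mem f h.1, Set.mem_image_of_mem f h.2⟩
  exact ⟨f w, Set.mem_image_of_mem f hw, by rwa [f.dist_eq, f.dist_eq]⟩

lemma metricDim_le_encard {S : Set V} (hS : IsResolvingSet G S) : metricDim G ≤ S.encard :=
  iInf_le (fun S : {S : Set V // IsResolvingSet G S} => (S : Set V).encard) ⟨S, hS⟩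

lemma metricDim_le_of_iso (f : G ≃g G') : metricDim G' ≤ metricDim G :=
  le_iInf fun S => (metricDim_le_encard (S.2.image f)).trans_eq (f.injective.encard_image _)

lemma SimpleGraph.Iso.metricDim_eq (f : G ≃g G') : metricDim G = metricDim G' :=
  le_antisymm (metricDim_le_of_iso f.symm) (metricDim_le_of_iso f)

/-- A single vertex `w` cannot resolve two of its neighbours. -/
lemma two_le_metricDim [Nonempty V] (h : ∀ w, ∃ u v, u ≠ v ∧ G.Adj u w ∧ G.Adj v w) :
    2 ≤ metricDim G := by
  refine le_iInf fun ⟨S, hS⟩ => ?_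
  by_contra! hlt
  rcases Set.encard_le_one_iff_eq.mp (Order.le_of_lt_succ hlt) with rfl | ⟨w, rfl⟩
  · obtain ⟨u, v, huv, -⟩ := h (Classical.arbitrary V)
    obtain ⟨w, hw, -⟩ := hS u v huv (by simp)
    exact hw
  · obtain ⟨u, v, huv, hu, hv⟩ := h w
    obtain ⟨w', hw', hd⟩ := hS u v huv (by simp [hu.ne])
    rw [Set.mem_singleton_iff.mp hw', dist_eq_one_iff_adj.mpr hu, dist_eq_one_iff_adj.mpr hv] at hd
    exact hd rfl

end MetricDimension

section SupCoatomGraph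

def supCoatomGraph (L : Type*) [Lattice L] [BoundedOrder L] :
    SimpleGraph {x : L // x ≠ ⊥ ∧ x ≠ ⊤} where
  Adj x y := x ≠ y ∧ IsCoatom (x.1 ⊔ y.1)
  symm := ⟨fun x y h => ⟨h.1.symm, sup_comm x.1 y.1 ▸ h.2⟩⟩
  loopless := ⟨fun _ h => h.1 rfl⟩

instance {L : Type*} [PartialOrder L] [OrderTop L] [Fintype L] [DecidableEq L] [DecidableLE L] :
    DecidablePred (IsCoatom : L → Prop) :=
  fun _ => decidable_of_iff _ isCoatom_iff_ge_of_le.symm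

instance {L : Type*} [Lattice L] [BoundedOrder L] [DecidableEq L]
    [DecidablePred (IsCoatom : L → Prop)] (x y : {x : L // x ≠ ⊥ ∧ x ≠ ⊤}) :
    Decidable ((supCoatomGraph L).Adj x y) :=
  inferInstanceAs (Decidable (x ≠ y ∧ IsCoatom (x.1 ⊔ y.1)))

variable {L L' : Type*} [Lattice L] [BoundedOrder L] [Lattice L'] [BoundedOrder L']

def OrderIso.supCoatomGraphIso (f : L ≃o L') : supCoatomGraph L ≃g supCoatomGraph L' where
  toEquiv := f.toEquiv.subtypeEquiv fun x => by simp
  map_rel_iff' {x y} := by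
    change _ ≠ _ ∧ IsCoatom (f x.1 ⊔ f y.1) ↔ x ≠ y ∧ IsCoatom (x.1 ⊔ y.1)
    rw [← map_sup, f.isCoatom_iff]
    exact and_congr_left' (Equiv.injective _).ne_iff

lemma PIS_eq_supCoatomGraph (R : Type*) [CommRing R] [IsArtinianRing R] :
    PIS R = supCoatomGraph (Ideal R) := by
  ext I J
  simp only [PIS, supCoatomGraph, Submodule.add_eq_sup, IsArtinianRing.isPrime_iff_isMaximal,
    Ideal.isMaximal_def]

end SupCoatomGraph

def OrderIso.prodCongr {α β γ δ : Type*} [LE α] [LE β] [LE γ] [LE δ] (f : α ≃o β)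
    (g : γ ≃o δ) : α × γ ≃o β × δ where
  toEquiv := f.toEquiv.prodCongr g.toEquiv
  map_rel_iff' := by simp [Prod.le_def]

noncomputable def idealOrderIsoBoolCube {R F₁ F₂ F₃ : Type*} [CommRing R] [Field F₁] [Field F₂]
    [Field F₃] (e : R ≃+* F₁ × F₂ × F₃) : Ideal R ≃o Bool × Bool × Bool :=
  e.symm.idealComapOrderIso.trans <| Ideal.idealProdEquiv.trans <|
    OrderIso.prodCongr IsSimpleOrder.orderIsoBool <| Ideal.idealProdEquiv.trans <|
      OrderIso.prodCongr IsSimpleOrder.orderIsoBool IsSimpleOrder.orderIsoBool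

-- The `Decidable` instances of the quantified statements below exceed the default size bound.
set_option synthInstance.maxSize 1024 in
theorem metricDim_supCoatomGraph_boolCube :
    metricDim (supCoatomGraph (Bool × Bool × Bool)) = 2 := by
  let G := supCoatomGraph (Bool × Bool × Bool)
  have hdist := dist_eq_ite_of_forall_exists_common_adj (G := G) (by decide)
  let a : {x : Bool × Bool × Bool // x ≠ ⊥ ∧ x ≠ ⊤} := ⟨(true, true, false), by decide⟩
  let b : {x : Bool × Bool × Bool // x ≠ ⊥ ∧ x ≠ ⊤} := ⟨(true, false, true), by decide⟩
  have : Nonempty {x : Bool × Bool × Bool // x ≠ ⊥ ∧ x ≠ ⊤} := ⟨a⟩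
  have hres : IsResolvingSet G {a, b} := by
    intro u v huv _
    have : ∀ u v, u ≠ v → (G.dist u a ≠ G.dist v a ∨ G.dist u b ≠ G.dist v b) := by
      simp only [hdist]; decide
    rcases this u v huv with h | h
    exacts [⟨a, by simp, h⟩, ⟨b, by simp, h⟩]
  refine le_antisymm ?_ (two_le_metricDim (by decide))
  calc metricDim G ≤ ({a, b} : Set _).encard := metricDim_le_encard hres
    _ = 2 := Set.encard_pair (by decide)

/-- If `R` is isomorphic to a direct product of three fields, then the metric dimension
of its prime ideal sum graph equals 2. -/
theorem metricDim_PIS_three_fields {R F₁ F₂ F₃ : Type*} [CommRing R]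
    [Field F₁] [Field F₂] [Field F₃] (e : R ≃+* (F₁ × F₂ × F₃)) :
    metricDim (PIS R) = 2 := by
  have : IsArtinianRing R := e.symm.isArtinianRing
  rw [PIS_eq_supCoatomGraph, (OrderIso.supCoatomGraphIso (idealOrderIsoBoolCube e)).metricDim_eq]
  exact metricDim_supCoatomGraph_boolCube
end

section
/- Let n ≥ 4 and let R ≅ F₁ × ⋯ × Fₙ be a direct product of n fields. Then the metric dimension of the prime ideal sum graph PIS(R) is at least n. -/
open scoped Classical

/-!
The ideals of `R ≅ ∏ᵢ Fᵢ` correspond to subsets of the index set via their supports, with `+`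
becoming union; as `R` is artinian its prime ideals are the maximal ones, i.e. the supports
`{i}ᶜ`. So the vertices are the `2ⁿ - 2` nonempty proper subsets, two of them adjacent iff
their union misses exactly one index, and the graph has diameter at most `2`. Hence the
distance from a vertex outside a resolving set `S` to a vertex of `S` is `1` or `2` according to
adjacency, the vertices outside `S` are told apart by their adjacency patterns on `S`, and
`2ⁿ - 2 ≤ |S| + 2^|S|`, which forces `|S| ≥ n` once `n ≥ 4`.
-/

open Finset

def OrderIso.piCongrRight {ι : Type*} {α β : ι → Type*} [∀ i, LE (α i)] [∀ i, LE (β i)]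
    (f : ∀ i, α i ≃o β i) : (∀ i, α i) ≃o ∀ i, β i where
  toEquiv := Equiv.piCongrRight fun i => (f i).toEquiv
  map_rel_iff' := by simp [Pi.le_def]

/-- Sends an ideal to its support. -/
noncomputable def Ideal.piFieldOrderIso {ι : Type*} [Fintype ι] (F : ι → Type*)
    [∀ i, Field (F i)] : Ideal (∀ i, F i) ≃o Finset ι :=
  Ideal.piOrderIso.trans <|
    (OrderIso.piCongrRight fun _ => IsSimpleOrder.orderIsoBool.trans
      (IsSimpleOrder.orderIsoBool (α := Prop)).symm).trans Fintype.finsetOrderIsoSet.symm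

lemma Finset.exists_isCoatom_union_isCoatom_union {ι : Type*} [Fintype ι] [DecidableEq ι]
    (hι : 3 ≤ Fintype.card ι) {s t : Finset ι} (hs : s ≠ univ) (ht : t ≠ univ) :
    ∃ c : Finset ι, c ≠ ∅ ∧ IsCoatom (s ∪ c) ∧ IsCoatom (c ∪ t) := by
  have compl_ne_empty {u : Finset ι} (hu : #u < 3) : uᶜ ≠ ∅ := by
    rw [Ne, compl_eq_empty_iff, ← card_eq_iff_eq_univ]
    omega
  simp only [Finset.isCoatom_iff]
  by_cases hst : ∃ k, k ∉ s ∧ k ∉ t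
  · obtain ⟨k, hks, hkt⟩ := hst
    refine ⟨{k}ᶜ, compl_ne_empty (by simp), ⟨k, ?_⟩, ⟨k, ?_⟩⟩ <;> ext <;> simp <;> grind
  · obtain ⟨i, hi⟩ : ∃ i, i ∉ s := by simpa [eq_univ_iff_forall] using hs
    obtain ⟨j, hj⟩ : ∃ j, j ∉ t := by simpa [eq_univ_iff_forall] using ht
    refine ⟨{i, j}ᶜ, compl_ne_empty (card_le_two.trans_lt (by norm_num)), ⟨i, ?_⟩, ⟨j, ?_⟩⟩ <;>
      ext <;> simp <;> grind

lemma Fintype.card_subtype_ne_bot_and_ne_top {α : Type*} [PartialOrder α] [BoundedOrder α]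
    [Nontrivial α] [Fintype α] [DecidableEq α] :
    Fintype.card {a : α // a ≠ ⊥ ∧ a ≠ ⊤} = Fintype.card α - 2 := by
  have : ({a | a ≠ ⊥ ∧ a ≠ ⊤} : Finset α) = (univ.erase ⊥).erase ⊤ := by ext; simp [and_comm]
  rw [Fintype.card_subtype, this, card_erase_of_mem (by simp), card_erase_of_mem (mem_univ _),
    card_univ]
  omega

lemma Nat.le_of_two_pow_sub_two_le_add_two_pow {m n : ℕ} (hn : 4 ≤ n)
    (h : 2 ^ n - 2 ≤ m + 2 ^ m) : n ≤ m := by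
  by_contra! hmn
  obtain ⟨k, rfl⟩ := Nat.exists_eq_add_of_le' hn
  have hm : 2 ^ m ≤ 2 ^ (k + 3) := Nat.pow_le_pow_right two_pos (by omega)
  have hk : k < 2 ^ k := Nat.lt_two_pow_self
  rw [pow_add] at hm h
  omega

lemma SimpleGraph.dist_eq_ite_adj {V : Type*} {G : SimpleGraph V} (hG : G.ediam ≤ 2)
    {u v : V} (huv : u ≠ v) : G.dist u v = if G.Adj u v then 1 else 2 := by
  split_ifs with h
  · exact dist_eq_one_iff_adj.mpr h
  · have hcommon : (G.commonNeighbors u v).Nonempty := by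
      have hle : G.edist u v ≤ 2 := edist_le_ediam.trans hG
      contrapose! hle
      exact two_lt_edist_iff.mpr ⟨huv, h, hle⟩
    simp [dist, edist_eq_two_iff.mpr ⟨huv, h, hcommon⟩]

lemma IsResolvingSet.card_le {V : Type*} [Finite V] {G : SimpleGraph V} (hG : G.ediam ≤ 2)
    {S : Set V} (hS : IsResolvingSet G S) : Nat.card V ≤ S.ncard + 2 ^ S.ncard := by
  have adj_injective : Function.Injective fun (v : ↥Sᶜ) (w : S) => G.Adj v w := by
    intro u v huv
    by_contra hne
    obtain ⟨w, hw, hd⟩ := hS u v (Subtype.coe_ne_coe.mpr hne) fun h => u.2 h.1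
    have hu : u.1 ≠ w := fun h => u.2 (h ▸ hw)
    have hv : v.1 ≠ w := fun h => v.2 (h ▸ hw)
    have hadj : G.Adj u w ↔ G.Adj v w := iff_of_eq (congrFun huv ⟨w, hw⟩)
    rw [SimpleGraph.dist_eq_ite_adj hG hu, SimpleGraph.dist_eq_ite_adj hG hv, hadj] at hd
    exact hd rfl
  calc Nat.card V = S.ncard + Nat.card ↥Sᶜ := (Set.ncard_add_ncard_compl S).symm
    _ ≤ S.ncard + 2 ^ S.ncard := by
      grw [Nat.card_le_card_of_injective _ adj_injective]
      simp [Nat.card_fun, Nat.card_coe_set_eq]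

namespace PIS

variable {R : Type*} [CommRing R] {ι : Type*} [Fintype ι] [DecidableEq ι]

lemma adj_iff_isCoatom_sup [IsArtinianRing R] {u v : PISVertex R} :
    (PIS R).Adj u v ↔ u ≠ v ∧ IsCoatom (u.1 ⊔ v.1) := by
  rw [PIS, ← Ideal.isMaximal_def, ← IsArtinianRing.isPrime_iff_isMaximal, ← Ideal.add_eq_sup]

lemma ediam_le_two [IsArtinianRing R] (Φ : Ideal R ≃o Finset ι) (hι : 3 ≤ Fintype.card ι) :
    (PIS R).ediam ≤ 2 := by
  have adj_of_isCoatom {x y : PISVertex R} (hxy : IsCoatom (Φ x.1 ∪ Φ y.1)) :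
      x ≠ y → (PIS R).Adj x y := by
    rw [← sup_eq_union, ← map_sup, OrderIso.isCoatom_iff] at hxy
    exact fun hne => adj_iff_isCoatom_sup.mpr ⟨hne, hxy⟩
  refine SimpleGraph.ediam_le_iff.mpr fun u v => ?_
  by_cases huv : u = v
  · simp [huv]
  by_cases h : (PIS R).Adj u v
  · simp [SimpleGraph.edist_eq_one_iff_adj.mpr h]
  obtain ⟨c, hc, huc, hcv⟩ := exists_isCoatom_union_isCoatom_union hι (s := Φ u.1) (t := Φ v.1)
    (by simpa [← top_eq_univ] using u.2.2) (by simpa [← top_eq_univ] using v.2.2)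
  have hcu : c ≠ Φ u.1 := by rintro rfl; exact h (adj_of_isCoatom hcv huv)
  have hcv' : c ≠ Φ v.1 := by rintro rfl; exact h (adj_of_isCoatom huc huv)
  let w : PISVertex R := ⟨Φ.symm c, by simpa using hc, by
    simpa using fun hc' => huc.1 (by simp [hc'])⟩
  have huw : (PIS R).Adj u w :=
    adj_of_isCoatom (y := w) (by simpa [w] using huc) fun huw => hcu (by simp [huw, w])
  have hwv : (PIS R).Adj w v :=
    adj_of_isCoatom (x := w) (by simpa [w] using hcv) fun hwv => hcv' (by simp [← hwv, w])
  exact (SimpleGraph.edist_eq_two_iff.mpr ⟨huv, h, w, huw, hwv.symm⟩).le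

lemma natCard_vertex [Nonempty ι] (Φ : Ideal R ≃o Finset ι) :
    Nat.card (PISVertex R) = 2 ^ Fintype.card ι - 2 := by
  rw [Nat.card_congr (Φ.toEquiv.subtypeEquiv (q := fun s => s ≠ ⊥ ∧ s ≠ ⊤) fun I => by
      simp only [OrderIso.coe_toEquiv, ne_eq, map_eq_bot_iff, map_eq_top_iff]),
    Nat.card_eq_fintype_card, Fintype.card_subtype_ne_bot_and_ne_top, Fintype.card_finset]

end PIS

/-- If `R` is isomorphic to a direct product of `n ≥ 4` fields, then the metric dimension
of its prime ideal sum graph is at least `n`. -/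
theorem metricDim_PIS_n_fields_ge {R : Type*} [CommRing R] {n : ℕ} (hn : 4 ≤ n)
    (F : Fin n → Type*) [∀ i, Field (F i)] (e : R ≃+* ∀ i, F i) :
    (n : ℕ∞) ≤ metricDim (PIS R) := by
  have : IsArtinianRing R := e.symm.isArtinianRing
  have : Nonempty (Fin n) := ⟨⟨0, by omega⟩⟩
  let Φ : Ideal R ≃o Finset (Fin n) := e.idealComapOrderIso.symm.trans (Ideal.piFieldOrderIso F)
  have : Finite (Ideal R) := .of_equiv _ Φ.symm.toEquiv
  refine le_iInf fun S => ?_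
  have hcard := S.2.card_le (PIS.ediam_le_two Φ (by simp; omega))
  rw [PIS.natCard_vertex Φ, Fintype.card_fin] at hcard
  rw [← (Set.toFinite S.1).cast_ncard_eq]
  exact_mod_cast Nat.le_of_two_pow_sub_two_le_add_two_pow hn hcard
end

section
/- Let n ≥ 4 and let R ≅ F₁ × ⋯ × Fₙ be a direct product of n fields. Then the set of all maximal ideals of R (i.e., the n ideals having the zero ideal in exactly one coordinate and the full field in all other coordinates) is a resolving set for the prime ideal sum graph PIS(R); in particular, the metric dimension of PIS(R) is at most n. -/
open scoped Classical

/-! Through `R ≃+* ∏ i, F i` every ideal of `R` is a product of ideals `0` or `F i`, so ideals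
correspond to their supports `S ⊆ ι`, sums of ideals to unions, and prime (= maximal, the ring
being Artinian) ideals to the complements `{i}ᶜ`. If `i ∉ S`, the vertex with support `S` is equal
or adjacent to the maximal ideal `Mᵢ`; if `i ∈ S`, it is not, but both are adjacent to the vertex
with support `{i, j}ᶜ` for any `j ∉ S`, which is nonzero as soon as `ι` has three elements. So
distinct vertices, having distinct supports, are separated by `Mᵢ` for any `i` in their symmetric
difference. -/

noncomputable def IsSimpleOrder.piOrderIsoSet {ι : Type*} {α : ι → Type*} [∀ i, PartialOrder (α i)]
    [∀ i, BoundedOrder (α i)] [∀ i, IsSimpleOrder (α i)] : (∀ i, α i) ≃o Set ι where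
  toFun a := {i | a i = ⊤}
  invFun S i := if i ∈ S then ⊤ else ⊥
  left_inv a := funext fun i => by rcases eq_bot_or_eq_top (a i) with h | h <;> simp [h]
  right_inv S := Set.ext fun i => by by_cases h : i ∈ S <;> simp [h]
  map_rel_iff' {a b} := by
    simp only [Equiv.coe_fn_mk, Set.ofPred_subset_ofPred, Pi.le_def]
    refine forall_congr' fun i => ?_
    rcases eq_bot_or_eq_top (a i) with ha | ha <;> rcases eq_bot_or_eq_top (b i) with hb | hb <;>
      simp [ha, hb]

namespace RingEquiv

variable {R : Type*} [CommRing R] {ι : Type*} [Finite ι] {F : ι → Type*} [∀ i, Field (F i)]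

section

variable (e : R ≃+* ∀ i, F i)

/-- `e.idealSupport I` is the set of coordinates `i` at which `e` maps `I` onto all of `F i`. -/
noncomputable def idealSupport : Ideal R ≃o Set ι :=
  e.idealComapOrderIso.symm.trans (Ideal.piOrderIso.trans IsSimpleOrder.piOrderIsoSet)

theorem isMaximal_iff_idealSupport_eq {I : Ideal R} :
    I.IsMaximal ↔ ∃ i, e.idealSupport I = {i}ᶜ := by
  rw [Ideal.isMaximal_def, ← e.idealSupport.isCoatom_iff, Set.isCoatom_iff]

theorem isPrime_iff_idealSupport_eq {I : Ideal R} :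
    I.IsPrime ↔ ∃ i, e.idealSupport I = {i}ᶜ := by
  have := e.symm.isArtinianRing
  rw [IsArtinianRing.isPrime_iff_isMaximal, e.isMaximal_iff_idealSupport_eq]

theorem injective_idealSupport_pisVertex :
    Function.Injective fun u : PISVertex R => e.idealSupport u.1 :=
  fun _ _ h => Subtype.ext (e.idealSupport.injective h)

theorem idealSupport_pisVertex_ne_univ (u : PISVertex R) : e.idealSupport u.1 ≠ Set.univ := by
  rw [← Set.top_eq_univ, ← e.idealSupport.map_top, e.idealSupport.injective.ne_iff]
  exact u.2.2

theorem exists_pisVertex_idealSupport_eq {S : Set ι} (h0 : S.Nonempty) (h1 : S ≠ Set.univ) :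
    ∃ u : PISVertex R, e.idealSupport u.1 = S := by
  refine ⟨⟨e.idealSupport.symm S, ?_, ?_⟩, e.idealSupport.apply_symm_apply S⟩
  · rw [Ne, OrderIso.symm_apply_eq, map_bot]
    exact h0.ne_empty
  · rw [Ne, OrderIso.symm_apply_eq, map_top]
    exact h1

theorem pis_adj_iff {u v : PISVertex R} :
    (PIS R).Adj u v ↔ u ≠ v ∧ ∃ i, e.idealSupport u.1 ∪ e.idealSupport v.1 = {i}ᶜ := by
  change u ≠ v ∧ (u.1 + v.1).IsPrime ↔ _
  rw [Submodule.add_eq_sup, e.isPrime_iff_idealSupport_eq, map_sup]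
  rfl

theorem pis_adj_of_union_eq {u v : PISVertex R} {i : ι}
    (hne : e.idealSupport u.1 ≠ e.idealSupport v.1)
    (h : e.idealSupport u.1 ∪ e.idealSupport v.1 = {i}ᶜ) : (PIS R).Adj u v :=
  e.pis_adj_iff.mpr ⟨fun huv => hne (huv ▸ rfl), i, h⟩

theorem pis_dist_le_one {u m : PISVertex R} {i : ι} (hm : e.idealSupport m.1 = {i}ᶜ)
    (hi : i ∉ e.idealSupport u.1) : (PIS R).dist u m ≤ 1 := by
  rcases eq_or_ne u m with rfl | hne
  · simp
  have hsub : e.idealSupport u.1 ∪ e.idealSupport m.1 = {i}ᶜ := by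
    rw [hm, Set.union_eq_right, Set.subset_compl_singleton_iff]
    exact hi
  exact (SimpleGraph.dist_eq_one_iff_adj.mpr (e.pis_adj_iff.mpr ⟨hne, i, hsub⟩)).le

theorem pis_not_adj_of_mem {u m : PISVertex R} {i : ι} (hm : e.idealSupport m.1 = {i}ᶜ)
    (hi : i ∈ e.idealSupport u.1) : ¬(PIS R).Adj u m := by
  intro hadj
  obtain ⟨-, k, hk⟩ := e.pis_adj_iff.mp hadj
  have huniv : e.idealSupport u.1 ∪ e.idealSupport m.1 = Set.univ := by
    rw [hm, ← Set.compl_subset_iff_union, Set.subset_compl_singleton_iff, Set.notMem_compl_iff]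
    exact hi
  exact Set.compl_ne_univ.mpr (Set.singleton_nonempty k) (hk.symm.trans huniv)

theorem exists_pis_adj_adj (h3 : 3 ≤ ENat.card ι) {u m : PISVertex R} {i : ι}
    (hm : e.idealSupport m.1 = {i}ᶜ) (hi : i ∈ e.idealSupport u.1) :
    ∃ w, (PIS R).Adj u w ∧ (PIS R).Adj m w := by
  obtain ⟨j, hj⟩ := (Set.ne_univ_iff_exists_notMem _).mp (e.idealSupport_pisVertex_ne_univ u)
  have hij : i ≠ j := fun h => hj (h ▸ hi)
  obtain ⟨k, hki, hkj⟩ := ENat.exists_ne_ne_of_three_le h3 i j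
  obtain ⟨w, hw⟩ := e.exists_pisVertex_idealSupport_eq (S := {i, j}ᶜ) ⟨k, by simp [hki, hkj]⟩
    (Set.compl_ne_univ.mpr (Set.insert_nonempty i {j}))
  have hiw : i ∉ e.idealSupport w.1 := by simp [hw]
  have hjw : j ∉ e.idealSupport w.1 := by simp [hw]
  have hjm : j ∈ e.idealSupport m.1 := by simpa [hm] using hij.symm
  refine ⟨w, e.pis_adj_of_union_eq (i := j) (fun h => hiw (h ▸ hi)) ?_,
    e.pis_adj_of_union_eq (i := i) (fun h => hjw (h ▸ hjm)) ?_⟩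
  · ext x
    simp only [hw, Set.mem_union, Set.mem_compl_iff, Set.mem_insert_iff, Set.mem_singleton_iff]
    grind
  · rw [hm, hw, Set.union_eq_left, Set.compl_subset_compl]
    exact Set.singleton_subset_iff.mpr (Set.mem_insert i {j})

theorem pis_dist_eq_two (h3 : 3 ≤ ENat.card ι) {u m : PISVertex R} {i : ι}
    (hm : e.idealSupport m.1 = {i}ᶜ) (hi : i ∈ e.idealSupport u.1) : (PIS R).dist u m = 2 := by
  have hne : u ≠ m := fun h => by simp [h, hm] at hi
  obtain ⟨w, huw, hmw⟩ := e.exists_pis_adj_adj h3 hm hi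
  rw [SimpleGraph.dist,
    SimpleGraph.edist_eq_two_iff.mpr ⟨hne, e.pis_not_adj_of_mem hm hi, w, huw, hmw⟩]
  rfl

end

theorem isResolvingSet_pis_maximalIdeals (e : R ≃+* ∀ i, F i) (h3 : 3 ≤ ENat.card ι) :
    IsResolvingSet (PIS R) {I : PISVertex R | I.1.IsMaximal} := by
  have separate : ∀ u v : PISVertex R, ∀ i ∈ e.idealSupport u.1, i ∉ e.idealSupport v.1 →
      ∃ m ∈ {I : PISVertex R | I.1.IsMaximal}, (PIS R).dist u m ≠ (PIS R).dist v m := by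
    intro u v i hu hv
    obtain ⟨k, hki, -⟩ := ENat.exists_ne_ne_of_three_le h3 i i
    obtain ⟨m, hm⟩ := e.exists_pisVertex_idealSupport_eq (S := {i}ᶜ) ⟨k, hki⟩
      (Set.compl_ne_univ.mpr (Set.singleton_nonempty i))
    refine ⟨m, e.isMaximal_iff_idealSupport_eq.mpr ⟨i, hm⟩, ?_⟩
    have hu2 := e.pis_dist_eq_two h3 hm hu
    have hv1 := e.pis_dist_le_one hm hv
    omega
  intro u v huv _
  obtain ⟨i, hi⟩ := not_forall.mp (mt Set.ext (e.injective_idealSupport_pisVertex.ne huv))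
  by_cases hu : i ∈ e.idealSupport u.1
  · exact separate u v i hu fun hv => hi (iff_of_true hu hv)
  · obtain ⟨m, hm, hd⟩ := separate v u i (by tauto) hu
    exact ⟨m, hm, hd.symm⟩

theorem encard_pis_maximalIdeals_le (e : R ≃+* ∀ i, F i) :
    {I : PISVertex R | I.1.IsMaximal}.encard ≤ ENat.card ι :=
  calc {I : PISVertex R | I.1.IsMaximal}.encard
      ≤ (Set.range fun i : ι => ({i}ᶜ : Set ι)).encard :=
        Set.encard_le_encard_of_injOn
          (fun _ hI => (e.isMaximal_iff_idealSupport_eq.mp hI).imp fun _ => Eq.symm)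
          e.injective_idealSupport_pisVertex.injOn
    _ ≤ ENat.card ι := by
      rw [← Set.image_univ, ← Set.encard_univ ι]
      exact Set.encard_image_le _ _

theorem metricDim_pis_le (e : R ≃+* ∀ i, F i) (h3 : 3 ≤ ENat.card ι) :
    metricDim (PIS R) ≤ ENat.card ι :=
  (iInf_le _ ⟨_, e.isResolvingSet_pis_maximalIdeals h3⟩).trans e.encard_pis_maximalIdeals_le

end RingEquiv

/-- If `R` is isomorphic to a direct product of `n ≥ 4` fields, then the set of all
maximal ideals of `R` is a resolving set for `PIS R`; in particular the metric
dimension of `PIS R` is at most `n`. -/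
theorem maximalIdeals_resolving_PIS_n_fields {R : Type*} [CommRing R] {n : ℕ} (hn : 4 ≤ n)
    (F : Fin n → Type*) [∀ i, Field (F i)] (e : R ≃+* ∀ i, F i) :
    IsResolvingSet (PIS R) {I : PISVertex R | I.1.IsMaximal} ∧
      metricDim (PIS R) ≤ n := by
  have hcard : ENat.card (Fin n) = n := by simp
  have h3 : 3 ≤ ENat.card (Fin n) := hcard ▸ by exact_mod_cast (by omega : 3 ≤ n)
  exact ⟨e.isResolvingSet_pis_maximalIdeals h3, hcard ▸ e.metricDim_pis_le h3⟩
end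

section
/- Let R ≅ R₁ × ⋯ × Rₙ, where each (Rᵢ, 𝔪ᵢ) is an Artinian local principal ideal ring having at least 2 nonzero proper ideals, and assume either n ≥ 2, or n = 1 and R₁ has at least 3 nonzero proper ideals. Then the metric dimension of the prime ideal sum graph PIS(R) equals |A(R)*| − 3ⁿ + 1, where A(R)* denotes the set of nonzero proper ideals of R. -/
open scoped Classical

/-!
Write `R ≅ ∏ Rᵢ` and classify an ideal of a factor as `⊤`, the maximal ideal, or smaller. Ideals
of an Artinian local principal ideal ring form a chain whose only prime is the maximal ideal, so
`I + J` is prime exactly when the coordinatewise minimum of the type vectors of `I` and `J` is a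
unit vector. Thus adjacency in `PIS R` only depends on the type vectors, which range over all
`3ⁿ - 1` nonzero vectors in `{0, 1, 2}ⁿ`. Any two vertices have a common neighbour, so distances
are `1` or `2` and vertices of equal type are twins: a resolving set omits at most one vertex of
each type. Conversely, omitting exactly one vertex of each type leaves a resolving set, since two
distinct type vectors are separated by a type vector with a coordinate `2`, and such a type is
carried by at least two vertices.
-/

section MetricDimension

variable {V P : Type*} {G : SimpleGraph V}

theorem IsResolvingSet.injOn_compl {S : Set V} (hS : IsResolvingSet G S) {f : V → P}
    {D : P → P → ℕ} (hD : ∀ u w, u ≠ w → G.dist u w = D (f u) (f w)) : Set.InjOn f Sᶜ := by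
  intro u hu v hv hf
  by_contra huv
  obtain ⟨w, hw, hne⟩ := hS u v huv fun h => hu h.1
  rw [hD u w (by rintro rfl; exact hu hw), hD v w (by rintro rfl; exact hv hw), hf] at hne
  exact hne rfl

theorem injOn_range_rangeSplitting (f : V → P) :
    Set.InjOn f (Set.range (Set.rangeSplitting f)) := by
  rintro _ ⟨p, rfl⟩ _ ⟨q, rfl⟩ h
  rw [Set.apply_rangeSplitting f p, Set.apply_rangeSplitting f q] at h
  rw [Subtype.ext h]

theorem isResolvingSet_compl_range_rangeSplitting (hG : G.Preconnected) {f : V → P}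
    {D : P → P → ℕ} (hD : ∀ u w, u ≠ w → G.dist u w = D (f u) (f w))
    (hsep : ∀ u v, f u ≠ f v → ∃ w w', w ≠ w' ∧ f w = f w' ∧ D (f u) (f w) ≠ D (f v) (f w)) :
    IsResolvingSet G (Set.range (Set.rangeSplitting f))ᶜ := by
  set T := Set.range (Set.rangeSplitting f)
  have hdist_ne_zero : ∀ u v, u ≠ v → G.dist u v ≠ 0 := fun u v huv =>
    ((hG u v).dist_eq_zero_iff).not.2 huv
  intro u v huv _
  by_cases hu : u ∈ Tᶜ
  · exact ⟨u, hu, by rw [SimpleGraph.dist_self]; exact (hdist_ne_zero v u huv.symm).symm⟩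
  by_cases hv : v ∈ Tᶜ
  · exact ⟨v, hv, by rw [SimpleGraph.dist_self]; exact hdist_ne_zero u v huv⟩
  rw [Set.notMem_compl_iff] at hu hv
  have hfuv : f u ≠ f v := fun h => huv (injOn_range_rangeSplitting f hu hv h)
  obtain ⟨w, w', hww', hfw, hDw⟩ := hsep u v hfuv
  obtain ⟨x, hxT, hfx⟩ : ∃ x ∈ Tᶜ, f x = f w := by
    by_cases hw : w ∈ T
    · exact ⟨w', fun hw' => hww' (injOn_range_rangeSplitting f hw hw' hfw), hfw.symm⟩
    · exact ⟨w, hw, rfl⟩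
  refine ⟨x, hxT, ?_⟩
  rw [hD u x (by rintro rfl; exact hxT hu), hD v x (by rintro rfl; exact hxT hv), hfx]
  exact hDw

theorem metricDim_eq_of_dist_eq [Finite V] (hG : G.Preconnected) (f : V → P)
    (D : P → P → ℕ) (hD : ∀ u w, u ≠ w → G.dist u w = D (f u) (f w))
    (hsep : ∀ u v, f u ≠ f v → ∃ w w', w ≠ w' ∧ f w = f w' ∧ D (f u) (f w) ≠ D (f v) (f w)) :
    metricDim G = ENat.card V - (Set.range f).encard := by
  apply le_antisymm
  · set T := Set.range (Set.rangeSplitting f)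
    have hT : T.encard = (Set.range f).encard := by
      simpa only [Set.image_univ, Set.encard_univ, ENat.card_coe_set_eq] using
        (Set.rangeSplitting_injective f).encard_image Set.univ
    calc metricDim G ≤ Tᶜ.encard :=
          iInf_le_of_le ⟨Tᶜ, isResolvingSet_compl_range_rangeSplitting hG hD hsep⟩ le_rfl
      _ = ENat.card V - (Set.range f).encard := by
          rw [← hT, ← Set.encard_univ, ← Set.encard_add_encard_compl T]
          exact (ENat.addLECancellable_of_ne_top T.toFinite.encard_lt_top.ne).add_tsub_cancel_left.symm
  · refine le_iInf fun ⟨S, hS⟩ => ?_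
    rw [tsub_le_iff_right, ← Set.encard_univ, ← Set.encard_add_encard_compl S]
    gcongr
    exact Set.encard_le_encard_of_injOn (fun x _ => Set.mem_range_self x) (hS.injOn_compl hD)

theorem encard_range_add_one_le_of_not_injective {f : V → P} (hf : ¬ f.Injective) :
    (Set.range f).encard + 1 ≤ ENat.card V := by
  obtain ⟨u, v, hfuv, huv⟩ := Function.not_injective_iff.1 hf
  have hsub : Set.range f ⊆ f '' {v}ᶜ := by
    rintro _ ⟨x, rfl⟩
    by_cases hx : x = v
    · exact ⟨u, huv, hx ▸ hfuv⟩
    · exact ⟨x, hx, rfl⟩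
  calc (Set.range f).encard + 1 ≤ ({v}ᶜ : Set V).encard + 1 := by
        gcongr; exact (Set.encard_le_encard hsub).trans (Set.encard_image_le _ _)
    _ = ENat.card V := by
        rw [Set.compl_eq_univ_sdiff, Set.encard_sdiff_singleton_add_one (Set.mem_univ v),
          Set.encard_univ]

section AdjacencyThroughLabels

variable {f : V → P} {Q : P → P → Prop}

theorem dist_eq_ite_of_adj_iff (hadj : ∀ a b, G.Adj a b ↔ a ≠ b ∧ Q (f a) (f b))
    (hcommon : ∀ a b, ∃ c, Q (f a) (f c) ∧ Q (f b) (f c)) {u v : V} (huv : u ≠ v) :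
    G.dist u v = if Q (f u) (f v) then 1 else 2 := by
  split_ifs with hQ
  · exact SimpleGraph.dist_eq_one_iff_adj.2 ((hadj u v).2 ⟨huv, hQ⟩)
  have hnadj : ¬ G.Adj u v := fun h => hQ ((hadj u v).1 h).2
  obtain ⟨c, hu, hv⟩ := hcommon u v
  have hcu : c ≠ u := by rintro rfl; exact hnadj ((hadj v c).2 ⟨huv.symm, hv⟩).symm
  have hcv : c ≠ v := by rintro rfl; exact hnadj ((hadj u c).2 ⟨huv, hu⟩)
  have huc : G.Adj u c := (hadj u c).2 ⟨hcu.symm, hu⟩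
  have hcv' : G.Adj c v := ((hadj v c).2 ⟨hcv.symm, hv⟩).symm
  let walk : G.Walk u v := .cons huc hcv'.toWalk
  have hle : G.dist u v ≤ 2 := SimpleGraph.dist_le walk
  have h0 : G.dist u v ≠ 0 := walk.reachable.dist_eq_zero_iff.not.2 huv
  have h1 : G.dist u v ≠ 1 := fun h => hnadj (SimpleGraph.dist_eq_one_iff_adj.1 h)
  omega

theorem preconnected_of_adj_iff (hadj : ∀ a b, G.Adj a b ↔ a ≠ b ∧ Q (f a) (f b))
    (hcommon : ∀ a b, ∃ c, Q (f a) (f c) ∧ Q (f b) (f c)) : G.Preconnected := by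
  intro u v
  obtain rfl | huv := eq_or_ne u v
  · rfl
  refine SimpleGraph.Reachable.of_dist_ne_zero ?_
  rw [dist_eq_ite_of_adj_iff hadj hcommon huv]
  split_ifs <;> simp

theorem metricDim_eq_of_adj_iff [Finite V] (hadj : ∀ a b, G.Adj a b ↔ a ≠ b ∧ Q (f a) (f b))
    (hcommon : ∀ a b, ∃ c, Q (f a) (f c) ∧ Q (f b) (f c))
    (hsep : ∀ u v, f u ≠ f v → ∃ w w', w ≠ w' ∧ f w = f w' ∧ ¬(Q (f u) (f w) ↔ Q (f v) (f w))) :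
    metricDim G = ENat.card V - (Set.range f).encard := by
  classical
  refine metricDim_eq_of_dist_eq (preconnected_of_adj_iff hadj hcommon) f
    (fun p q => if Q p q then 1 else 2) (fun u w huw => dist_eq_ite_of_adj_iff hadj hcommon huw)
    fun u v huv => ?_
  obtain ⟨w, w', hww', hfw, hQ⟩ := hsep u v huv
  refine ⟨w, w', hww', hfw, ?_⟩
  by_cases hu : Q (f u) (f w) <;> by_cases hv : Q (f v) (f w) <;> simp_all

end AdjacencyThroughLabels

end MetricDimension

section TypeVectors

variable {ι : Type*} [DecidableEq ι]

def IsPrimeType (p : ι → Fin 3) : Prop := ∃ j, p = Pi.single j 1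

theorem fin_three_inf_one_of_ne_zero {a : Fin 3} (ha : a ≠ 0) : a ⊓ 1 = 1 := by
  revert a; decide

theorem inf_single (p : ι → Fin 3) (j : ι) (a : Fin 3) :
    p ⊓ Pi.single j a = Pi.single j (p j ⊓ a) := by
  ext i
  by_cases h : i = j
  · subst h; simp
  · simp [h]

theorem isPrimeType_single_iff {j : ι} {a : Fin 3} : IsPrimeType (Pi.single j a) ↔ a = 1 := by
  refine ⟨fun ⟨k, hk⟩ => ?_, fun h => ⟨j, h ▸ rfl⟩⟩
  have hk' := congrFun hk k
  by_cases h : k = j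
  · subst h; simpa using hk'
  · simp [h] at hk'

theorem IsPrimeType.ne_two {p : ι → Fin 3} (hp : IsPrimeType p) (i : ι) : p i ≠ 2 := by
  obtain ⟨j, rfl⟩ := hp
  by_cases h : i = j
  · subst h; simp
  · simp [h]

theorem IsPrimeType.right_ne_zero {p q : ι → Fin 3} (h : IsPrimeType (p ⊓ q)) : q ≠ 0 := by
  rintro rfl
  obtain ⟨j, hj⟩ := h
  simpa using congrFun hj j

theorem exists_isPrimeType_inf_inf {p q : ι → Fin 3} (hp : p ≠ 0) (hq : q ≠ 0) :
    ∃ r, IsPrimeType (p ⊓ r) ∧ IsPrimeType (q ⊓ r) := by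
  by_cases hpq : ∃ j, p j ≠ 0 ∧ q j ≠ 0
  · obtain ⟨j, hpj, hqj⟩ := hpq
    refine ⟨Pi.single j 1, ?_, ?_⟩ <;>
      rw [inf_single, isPrimeType_single_iff, fin_three_inf_one_of_ne_zero ‹_›]
  · push Not at hpq
    obtain ⟨j, hpj⟩ := Function.ne_iff.1 hp
    obtain ⟨k, hqk⟩ := Function.ne_iff.1 hq
    have hqj : q j = 0 := hpq j hpj
    have hpk : p k = 0 := by_contra fun h => hqk (hpq k h)
    refine ⟨Pi.single j 1 ⊔ Pi.single k 1, ?_, ?_⟩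
    · rw [inf_sup_left, inf_single, inf_single, hpk, fin_three_inf_one_of_ne_zero hpj]
      simp [isPrimeType_single_iff]
    · rw [inf_sup_left, inf_single, inf_single, hqj, fin_three_inf_one_of_ne_zero hqk]
      simp [isPrimeType_single_iff]

theorem exists_isPrimeType_inf_xor {p q : ι → Fin 3} (hpq : p ≠ q) (hp : p ≠ 0) (hq : q ≠ 0) :
    ∃ c, (∃ j, c j = 2) ∧ ¬(IsPrimeType (p ⊓ c) ↔ IsPrimeType (q ⊓ c)) := by
  have inf_two : ∀ a : Fin 3, a ⊓ 2 = a := by decide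
  by_cases h1 : ∃ j, ¬(p j = 1 ↔ q j = 1)
  · obtain ⟨j, hj⟩ := h1
    refine ⟨Pi.single j 2, ⟨j, by simp⟩, ?_⟩
    rwa [inf_single, inf_single, inf_two, inf_two, isPrimeType_single_iff, isPrimeType_single_iff]
  push Not at h1
  obtain ⟨j, hj⟩ := Function.ne_iff.1 hpq
  have h02 : (p j = 0 ∧ q j = 2) ∨ (p j = 2 ∧ q j = 0) := by
    have := h1 j
    revert hj this; generalize p j = a; generalize q j = b; decide +revert
  wlog hpj : p j = 0 ∧ q j = 2 generalizing p q
  · obtain ⟨c, hc, hpqc⟩ := this hpq.symm hq hp (fun i => (h1 i).symm) (Ne.symm hj)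
      (by tauto) (h02.resolve_left hpj).symm
    exact ⟨c, hc, fun h => hpqc h.symm⟩
  obtain ⟨k, hpk⟩ := Function.ne_iff.1 hp
  have hkj : k ≠ j := by rintro rfl; exact hpk hpj.1
  refine ⟨Pi.single j 2 ⊔ Pi.single k 1, ⟨j, by simp [hkj.symm]⟩, fun h => ?_⟩
  have hp' : IsPrimeType (p ⊓ (Pi.single j 2 ⊔ Pi.single k 1)) := by
    rw [inf_sup_left, inf_single, inf_single, hpj.1, fin_three_inf_one_of_ne_zero hpk]
    simp [isPrimeType_single_iff]
  exact (h.1 hp').ne_two j (by simp [hpj.2, hkj.symm])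

end TypeVectors

open IsLocalRing

section LocalType

variable {A : Type*} [CommRing A] [IsLocalRing A]

/-- Ordered so that the type of the sum of two comparable ideals is the minimum of their types. -/
noncomputable def idealType (I : Ideal A) : Fin 3 :=
  if I = ⊤ then 0 else if I = maximalIdeal A then 1 else 2

theorem idealType_eq_zero_iff {I : Ideal A} : idealType I = 0 ↔ I = ⊤ := by
  unfold idealType; split_ifs <;> simp_all

theorem idealType_eq_one_iff {I : Ideal A} : idealType I = 1 ↔ I = maximalIdeal A := by
  unfold idealType; split_ifs <;> simp_all [((maximalIdeal.isMaximal A).ne_top).symm]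

theorem idealType_eq_two_iff {I : Ideal A} :
    idealType I = 2 ↔ I ≠ ⊤ ∧ I ≠ maximalIdeal A := by
  unfold idealType; split_ifs <;> simp_all

theorem idealType_antitone : Antitone (idealType (A := A)) := by
  intro I J hIJ
  by_cases hJ : J = ⊤
  · simp [idealType, hJ]
  have hI : I ≠ ⊤ := ne_top_of_le_ne_top hJ hIJ
  by_cases hJm : J = maximalIdeal A
  · rw [idealType_eq_one_iff.2 hJm]
    have := idealType_eq_zero_iff.not.2 hI
    revert this; generalize idealType I = a; decide +revert
  · have hIm : I ≠ maximalIdeal A := fun h =>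
      hJm ((maximalIdeal.isMaximal A).eq_of_le hJ (h ▸ hIJ)).symm
    rw [idealType_eq_two_iff.2 ⟨hI, hIm⟩]
    exact Fin.le_last _

theorem isPrime_iff_idealType_eq_one [IsArtinianRing A] {P : Ideal A} :
    P.IsPrime ↔ idealType P = 1 := by
  rw [IsArtinianRing.isPrime_iff_isMaximal, isMaximal_iff, idealType_eq_one_iff]

end LocalType

section ArtinianPIR

variable {A : Type*} [CommRing A] [IsLocalRing A] [IsArtinianRing A] [IsPrincipalIdealRing A]

theorem exists_eq_maximalIdeal_pow (I : Ideal A) : ∃ k, I = maximalIdeal A ^ k := by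
  obtain ⟨t, ht : maximalIdeal A ^ t = ⊥⟩ := (isArtinianRing_iff_isNilpotent_maximalIdeal A).1 ‹_›
  obtain rfl | hI := eq_or_ne I ⊥
  · exact ⟨t, ht.symm⟩
  obtain ⟨π, hπ⟩ := (IsPrincipalIdealRing.principal (maximalIdeal A)).principal
  have hpow : ∀ k, maximalIdeal A ^ k = Ideal.span {π ^ k} := fun k => by
    rw [hπ, Ideal.submodule_span_eq, Ideal.span_singleton_pow]
  have hex : ∃ k, ¬ I ≤ maximalIdeal A ^ (k + 1) := ⟨t, fun h =>
    hI (le_bot_iff.1 (ht ▸ h.trans (Ideal.pow_le_pow_right t.le_succ)))⟩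
  set k := Nat.find hex
  have hle : I ≤ maximalIdeal A ^ k := by
    cases hk : k with
    | zero => simp
    | succ l => exact not_not.1 (Nat.find_min hex (by omega : l < k))
  refine ⟨k, le_antisymm hle ?_⟩
  obtain ⟨x, hxI, hx⟩ := SetLike.not_le_iff_exists.1 (Nat.find_spec hex)
  obtain ⟨c, rfl⟩ := Ideal.mem_span_singleton.1 (hpow k ▸ hle hxI)
  have hc : IsUnit c := by
    by_contra hc
    exact hx (pow_succ (maximalIdeal A) k ▸
      Ideal.mul_mem_mul (hpow k ▸ Ideal.mem_span_singleton_self _) hc)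
  rw [hpow k, Ideal.span_singleton_le_iff_mem]
  simpa [mul_assoc] using I.mul_mem_right (↑hc.unit⁻¹ : A) hxI

theorem IsArtinianRing.ideal_le_total (I J : Ideal A) : I ≤ J ∨ J ≤ I := by
  obtain ⟨k, rfl⟩ := exists_eq_maximalIdeal_pow I
  obtain ⟨l, rfl⟩ := exists_eq_maximalIdeal_pow J
  exact (le_total l k).imp (Ideal.pow_le_pow_right ·) (Ideal.pow_le_pow_right ·)

theorem IsArtinianRing.finite_ideal : Finite (Ideal A) := by
  obtain ⟨t, ht : maximalIdeal A ^ t = ⊥⟩ := (isArtinianRing_iff_isNilpotent_maximalIdeal A).1 ‹_›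
  refine Finite.of_surjective (fun k : Fin (t + 1) => maximalIdeal A ^ (k : ℕ)) fun I => ?_
  obtain ⟨k, rfl⟩ := exists_eq_maximalIdeal_pow I
  refine ⟨⟨min k t, by omega⟩, ?_⟩
  rcases le_total k t with h | h
  · simp [h]
  · simp only [min_eq_right h, ht]
    exact (le_bot_iff.1 (ht ▸ Ideal.pow_le_pow_right h)).symm

theorem idealType_sup (I J : Ideal A) : idealType (I ⊔ J) = idealType I ⊓ idealType J := by
  rcases IsArtinianRing.ideal_le_total I J with h | h
  · rw [sup_eq_right.2 h, inf_eq_right.2 (idealType_antitone h)]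
  · rw [sup_eq_left.2 h, inf_eq_left.2 (idealType_antitone h)]

end ArtinianPIR

section NonzeroTypeTwo

variable {A : Type*} [CommRing A] [IsLocalRing A]

theorem encard_ne_bot_ne_top_le :
    {I : Ideal A | I ≠ ⊥ ∧ I ≠ ⊤}.encard ≤ {I : Ideal A | I ≠ ⊥ ∧ idealType I = 2}.encard + 1 :=
  calc {I : Ideal A | I ≠ ⊥ ∧ I ≠ ⊤}.encard
      ≤ (insert (maximalIdeal A) {I : Ideal A | I ≠ ⊥ ∧ idealType I = 2}).encard := by
        refine Set.encard_le_encard fun I ⟨hI0, hI⟩ => ?_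
        by_cases hIm : I = maximalIdeal A
        · exact Or.inl hIm
        · exact Or.inr ⟨hI0, idealType_eq_two_iff.2 ⟨hI, hIm⟩⟩
    _ ≤ _ := Set.encard_insert_le _ _

theorem exists_ne_bot_idealType_eq_two (h2 : 2 ≤ {I : Ideal A | I ≠ ⊥ ∧ I ≠ ⊤}.encard) :
    ∃ K : Ideal A, K ≠ ⊥ ∧ idealType K = 2 := by
  have h := h2.trans encard_ne_bot_ne_top_le
  rwa [show (2 : ℕ∞) = 1 + 1 from rfl, ENat.add_le_add_iff_right ENat.one_ne_top,
    Order.one_le_iff_ne_zero, Set.encard_ne_zero] at h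

theorem exists_ne_bot_idealType_eq_two_ne (h3 : 3 ≤ {I : Ideal A | I ≠ ⊥ ∧ I ≠ ⊤}.encard)
    (K : Ideal A) : ∃ K' : Ideal A, (K' ≠ ⊥ ∧ idealType K' = 2) ∧ K' ≠ K := by
  have h := h3.trans encard_ne_bot_ne_top_le
  rw [show (3 : ℕ∞) = 2 + 1 from rfl, ENat.add_le_add_iff_right ENat.one_ne_top] at h
  exact Set.exists_ne_of_one_lt_encard (lt_of_lt_of_le (by norm_num) h) K

theorem idealType_bot (h : maximalIdeal A ≠ ⊥) : idealType (⊥ : Ideal A) = 2 :=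
  idealType_eq_two_iff.2 ⟨bot_ne_top, h.symm⟩

theorem maximalIdeal_ne_bot_of_idealType_eq_two {K : Ideal A} (hK : K ≠ ⊥) (h : idealType K = 2) :
    maximalIdeal A ≠ ⊥ :=
  fun hm => hK (le_bot_iff.1 (hm ▸ le_maximalIdeal (idealType_eq_two_iff.1 h).1))

end NonzeroTypeTwo

section IdealOfType

variable {A : Type*} [CommRing A] [IsLocalRing A]

def idealOfType (K : Ideal A) : Fin 3 → Ideal A := ![⊤, maximalIdeal A, K]

theorem idealType_idealOfType {K : Ideal A} (hK : idealType K = 2) (t : Fin 3) :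
    idealType (idealOfType K t) = t := by
  fin_cases t
  · exact idealType_eq_zero_iff.2 rfl
  · exact idealType_eq_one_iff.2 rfl
  · exact hK

theorem idealOfType_ne_bot {K : Ideal A} (hK0 : K ≠ ⊥) (hK : idealType K = 2) (t : Fin 3) :
    idealOfType K t ≠ ⊥ := by
  fin_cases t
  · exact top_ne_bot
  · exact maximalIdeal_ne_bot_of_idealType_eq_two hK0 hK
  · exact hK0

end IdealOfType

section Product

variable {ι : Type*} [Finite ι] {Rs : ι → Type*} [∀ i, CommRing (Rs i)]

theorem Ideal.isPrime_pi_iff {J : ∀ i, Ideal (Rs i)} :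
    (Ideal.pi J).IsPrime ↔ ∃ j, (J j).IsPrime ∧ ∀ i, i ≠ j → J i = ⊤ := by
  classical
  have single_mem : ∀ i a, Pi.single i a ∈ Ideal.pi J ↔ a ∈ J i := fun i a => by
    refine ⟨fun h => by simpa using h i, fun h k => ?_⟩
    by_cases hk : k = i
    · subst hk; simpa using h
    · simp [hk]
  constructor
  · intro h
    obtain ⟨j, q, hq⟩ := PrimeSpectrum.exists_comap_evalRingHom_eq ⟨Ideal.pi J, h⟩
    have hJ : Ideal.pi J = q.asIdeal.comap (Pi.evalRingHom Rs j) := by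
      rw [← PrimeSpectrum.comap_asIdeal, hq]
    refine ⟨j, ?_, fun i hij => ?_⟩
    · have : J j = q.asIdeal := by ext a; rw [← single_mem, hJ]; simp
      exact this ▸ q.isPrime
    · rw [Ideal.eq_top_iff_one, ← single_mem, hJ]
      simp [hij.symm]
  · rintro ⟨j, hj, htop⟩
    have : Ideal.pi J = (J j).comap (Pi.evalRingHom Rs j) := by
      ext x
      refine ⟨fun h => h j, fun h i => ?_⟩
      by_cases hij : i = j
      · subst hij; exact h
      · simp [htop i hij]
    rw [this]
    exact Ideal.IsPrime.comap _

variable {R : Type*} [CommRing R]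

def idealPiOrderIso (e : R ≃+* ∀ i, Rs i) : Ideal R ≃o ∀ i, Ideal (Rs i) :=
  e.symm.idealComapOrderIso.trans Ideal.piOrderIso

theorem isPrime_iff_isPrime_pi_idealPiOrderIso (e : R ≃+* ∀ i, Rs i) (I : Ideal R) :
    I.IsPrime ↔ (Ideal.pi (idealPiOrderIso e I)).IsPrime := by
  have : Ideal.pi (idealPiOrderIso e I) = I.comap e.symm := Ideal.piOrderIso.symm_apply_apply _
  rw [this]
  refine ⟨fun h => Ideal.IsPrime.comap _, fun h => ?_⟩
  have := Ideal.map_isPrime_of_equiv e.symm (I := I.comap e.symm)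
  rwa [Ideal.map_comap_of_surjective _ e.symm.surjective] at this

theorem exists_vertex_idealPiOrderIso_eq (e : R ≃+* ∀ i, Rs i) {J : ∀ i, Ideal (Rs i)}
    (h0 : J ≠ ⊥) (h1 : J ≠ ⊤) : ∃ u : PISVertex R, idealPiOrderIso e u.1 = J := by
  set Φ := idealPiOrderIso e
  refine ⟨⟨Φ.symm J, fun h => h0 ?_, fun h => h1 ?_⟩, Φ.apply_symm_apply J⟩
  · rw [← Φ.apply_symm_apply J, h, map_bot]
  · rw [← Φ.apply_symm_apply J, h, map_top]

section TypeVector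

variable [∀ i, IsLocalRing (Rs i)]

noncomputable def typeVec (e : R ≃+* ∀ i, Rs i) (I : Ideal R) : ι → Fin 3 :=
  fun i => idealType (idealPiOrderIso e I i)

variable (e : R ≃+* ∀ i, Rs i)

theorem typeVec_eq_zero_iff {I : Ideal R} : typeVec e I = 0 ↔ I = ⊤ := by
  simp only [funext_iff, typeVec, Pi.zero_apply, idealType_eq_zero_iff]
  rw [← map_eq_top_iff (idealPiOrderIso e), funext_iff]
  rfl

theorem exists_vertex_eq_of_idealType_eq {J : ∀ i, Ideal (Rs i)} {c : ι → Fin 3} (h0 : J ≠ ⊥)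
    (hJ : ∀ i, idealType (J i) = c i) (hc : c ≠ 0) :
    ∃ u : PISVertex R, idealPiOrderIso e u.1 = J ∧ typeVec e u.1 = c := by
  obtain ⟨i, hi⟩ := Function.ne_iff.1 hc
  obtain ⟨u, hu⟩ := exists_vertex_idealPiOrderIso_eq e h0
    fun h => hi (hJ i ▸ idealType_eq_zero_iff.2 (congrFun h i))
  exact ⟨u, hu, funext fun i => by simp only [typeVec, hu, hJ]⟩

theorem exists_vertex_typeVec_eq {K : ∀ i, Ideal (Rs i)} (hK : ∀ i, K i ≠ ⊥ ∧ idealType (K i) = 2)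
    {p : ι → Fin 3} (hp : p ≠ 0) : ∃ u : PISVertex R, typeVec e u.1 = p := by
  obtain ⟨j, -⟩ := Function.ne_iff.1 hp
  obtain ⟨u, -, hu⟩ := exists_vertex_eq_of_idealType_eq e (J := fun i => idealOfType (K i) (p i))
    (fun h => idealOfType_ne_bot (hK j).1 (hK j).2 (p j) (congrFun h j))
    (fun i => idealType_idealOfType (hK i).2 (p i)) hp
  exact ⟨u, hu⟩

theorem exists_ne_vertices_typeVec_eq [DecidableEq ι] {K : ∀ i, Ideal (Rs i)}
    (hK : ∀ i, K i ≠ ⊥ ∧ idealType (K i) = 2)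
    (hι : Nontrivial ι ∨ ∀ i, 3 ≤ {I : Ideal (Rs i) | I ≠ ⊥ ∧ I ≠ ⊤}.encard)
    {c : ι → Fin 3} {j : ι} (hc : c j = 2) :
    ∃ u v : PISVertex R, u ≠ v ∧ typeVec e u.1 = c ∧ typeVec e v.1 = c := by
  obtain ⟨L, hLK, hL2, hL0⟩ :
      ∃ L : Ideal (Rs j), L ≠ K j ∧ idealType L = 2 ∧ (L ≠ ⊥ ∨ ∃ i, i ≠ j) := by
    rcases hι with hι | h3
    · exact ⟨⊥, (hK j).1.symm, idealType_bot (maximalIdeal_ne_bot_of_idealType_eq_two (hK j).1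
        (hK j).2), .inr (exists_ne j)⟩
    · obtain ⟨L, ⟨hL0, hL2⟩, hLK⟩ := exists_ne_bot_idealType_eq_two_ne (h3 j) (K j)
      exact ⟨L, hLK, hL2, .inl hL0⟩
  have hc0 : c ≠ 0 := fun h => by simp [h] at hc
  set J := fun i => idealOfType (K i) (c i)
  have hJ0 (i : ι) : J i ≠ ⊥ := idealOfType_ne_bot (hK i).1 (hK i).2 _
  have hJ (i : ι) : idealType (J i) = c i := idealType_idealOfType (hK i).2 _
  obtain ⟨u, hu, hcu⟩ :=
    exists_vertex_eq_of_idealType_eq e (fun h => hJ0 j (congrFun h j)) hJ hc0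
  obtain ⟨v, hv, hcv⟩ := exists_vertex_eq_of_idealType_eq e (J := Function.update J j L)
    (fun h => by
      rcases hL0 with hL0 | ⟨i, hi⟩
      · exact hL0 (by simpa using congrFun h j)
      · exact hJ0 i (by simpa [hi] using congrFun h i))
    (fun i => by
      by_cases h : i = j
      · subst h; simp [hL2, hc]
      · simp [h, hJ]) hc0
  refine ⟨u, v, fun huv => hLK ?_, hcu, hcv⟩
  subst huv
  simpa [J, idealOfType, hc] using congrFun (hv.symm.trans hu) j

theorem encard_compl_singleton_zero : ({0}ᶜ : Set (ι → Fin 3)).encard = 3 ^ Nat.card ι - 1 := by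
  rw [Set.compl_eq_univ_sdiff, Set.encard_sdiff_singleton_of_mem (Set.mem_univ 0), Set.encard_univ,
    ENat.card_eq_coe_natCard, Nat.card_fun]
  simp

theorem range_typeVec {K : ∀ i, Ideal (Rs i)} (hK : ∀ i, K i ≠ ⊥ ∧ idealType (K i) = 2) :
    Set.range (fun u : PISVertex R => typeVec e u.1) = {0}ᶜ :=
  Set.ext fun _ => ⟨by rintro ⟨u, rfl⟩; exact (typeVec_eq_zero_iff e).not.2 u.2.2,
    exists_vertex_typeVec_eq e hK⟩

theorem three_pow_le_card_PISVertex [Nonempty ι] (e : R ≃+* ∀ i, Rs i) {K : ∀ i, Ideal (Rs i)}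
    (hK : ∀ i, K i ≠ ⊥ ∧ idealType (K i) = 2)
    (hι : Nontrivial ι ∨ ∀ i, 3 ≤ {I : Ideal (Rs i) | I ≠ ⊥ ∧ I ≠ ⊤}.encard) :
    3 ^ Nat.card ι ≤ ENat.card (PISVertex R) := by
  classical
  obtain ⟨u, v, huv, hu, hv⟩ :=
    exists_ne_vertices_typeVec_eq e hK hι (c := fun _ => 2) (j := Classical.arbitrary ι) rfl
  have := encard_range_add_one_le_of_not_injective (f := fun u : PISVertex R => typeVec e u.1)
    fun hinj => huv (hinj (hu.trans hv.symm))
  rwa [range_typeVec e hK, encard_compl_singleton_zero,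
    tsub_add_cancel_of_le (one_le_pow₀ (by norm_num))] at this

variable [∀ i, IsArtinianRing (Rs i)]

theorem isPrime_iff_isPrimeType_typeVec [DecidableEq ι] {I : Ideal R} :
    I.IsPrime ↔ IsPrimeType (typeVec e I) := by
  rw [isPrime_iff_isPrime_pi_idealPiOrderIso e, Ideal.isPrime_pi_iff]
  refine exists_congr fun j => ?_
  simp only [isPrime_iff_idealType_eq_one, ← idealType_eq_zero_iff, funext_iff, typeVec,
    Pi.single_apply]
  refine ⟨fun ⟨h1, h0⟩ i => ?_, fun h => ⟨by simpa using h j, fun i hi => by simpa [hi] using h i⟩⟩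
  split_ifs with hi
  · exact hi ▸ h1
  · exact h0 i hi

variable [∀ i, IsPrincipalIdealRing (Rs i)]

theorem typeVec_sup (I J : Ideal R) : typeVec e (I ⊔ J) = typeVec e I ⊓ typeVec e J :=
  funext fun i => by simp only [typeVec, map_sup, Pi.sup_apply, idealType_sup, Pi.inf_apply]

theorem PIS_adj_iff [DecidableEq ι] (u v : PISVertex R) :
    (PIS R).Adj u v ↔ u ≠ v ∧ IsPrimeType (typeVec e u.1 ⊓ typeVec e v.1) := by
  rw [← typeVec_sup, ← isPrime_iff_isPrimeType_typeVec, ← Ideal.add_eq_sup]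
  rfl

theorem metricDim_PIS_eq_card_sub (e : R ≃+* ∀ i, Rs i) {K : ∀ i, Ideal (Rs i)}
    (hK : ∀ i, K i ≠ ⊥ ∧ idealType (K i) = 2)
    (hι : Nontrivial ι ∨ ∀ i, 3 ≤ {I : Ideal (Rs i) | I ≠ ⊥ ∧ I ≠ ⊤}.encard) :
    metricDim (PIS R) = ENat.card (PISVertex R) - (3 ^ Nat.card ι - 1) := by
  classical
  have := fun i => IsArtinianRing.finite_ideal (A := Rs i)
  have : Finite (Ideal R) := Finite.of_equiv _ (idealPiOrderIso e).symm.toEquiv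
  have hf0 (u : PISVertex R) : typeVec e u.1 ≠ 0 := (typeVec_eq_zero_iff e).not.2 u.2.2
  rw [← encard_compl_singleton_zero, ← range_typeVec e hK]
  refine metricDim_eq_of_adj_iff (Q := fun p q => IsPrimeType (p ⊓ q)) (PIS_adj_iff e)
    (fun u v => ?_) (fun u v huv => ?_)
  · obtain ⟨r, hur, hvr⟩ := exists_isPrimeType_inf_inf (hf0 u) (hf0 v)
    obtain ⟨w, rfl⟩ := exists_vertex_typeVec_eq e hK hur.right_ne_zero
    exact ⟨w, hur, hvr⟩
  · obtain ⟨c, ⟨j, hj⟩, hc⟩ := exists_isPrimeType_inf_xor huv (hf0 u) (hf0 v)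
    obtain ⟨w, w', hww', hw, hw'⟩ := exists_ne_vertices_typeVec_eq e hK hι hj
    exact ⟨w, w', hww', hw.trans hw'.symm, by simpa only [hw] using hc⟩

theorem metricDim_PIS_eq_of_ringEquiv_pi [Nonempty ι] (e : R ≃+* ∀ i, Rs i)
    (h2 : ∀ i, 2 ≤ {I : Ideal (Rs i) | I ≠ ⊥ ∧ I ≠ ⊤}.encard)
    (hι : Nontrivial ι ∨ ∀ i, 3 ≤ {I : Ideal (Rs i) | I ≠ ⊥ ∧ I ≠ ⊤}.encard) :
    metricDim (PIS R) = {I : Ideal R | I ≠ ⊥ ∧ I ≠ ⊤}.encard - 3 ^ Nat.card ι + 1 := by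
  choose K hK using fun i => exists_ne_bot_idealType_eq_two (h2 i)
  rw [metricDim_PIS_eq_card_sub e hK hι, AddLECancellable.tsub_tsub_assoc
    (ENat.addLECancellable_of_ne_top (by simp)) (three_pow_le_card_PISVertex e hK hι)
    (one_le_pow₀ (by norm_num))]
  rfl

end TypeVector

end Product

/-- If `R` is isomorphic to a product of `n` Artinian local principal ideal rings each
having at least 2 nonzero proper ideals, and either `n ≥ 2` or `n = 1` and the factor
has at least 3 nonzero proper ideals, then the metric dimension of `PIS R` equals
`|A(R)*| - 3 ^ n + 1`. -/
theorem metricDim_PIS_artinian_local_PIR {R : Type*} [CommRing R] {n : ℕ}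
    (Rs : Fin n → Type*) [∀ i, CommRing (Rs i)] [∀ i, IsArtinianRing (Rs i)]
    [∀ i, IsLocalRing (Rs i)] [∀ i, IsPrincipalIdealRing (Rs i)]
    (h2 : ∀ i, 2 ≤ {I : Ideal (Rs i) | I ≠ ⊥ ∧ I ≠ ⊤}.encard)
    (hn : 2 ≤ n ∨ (n = 1 ∧ ∀ i, 3 ≤ {I : Ideal (Rs i) | I ≠ ⊥ ∧ I ≠ ⊤}.encard))
    (e : R ≃+* ∀ i, Rs i) :
    metricDim (PIS R) = {I : Ideal R | I ≠ ⊥ ∧ I ≠ ⊤}.encard - 3 ^ n + 1 := by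
  have : Nonempty (Fin n) := ⟨⟨0, by omega⟩⟩
  simpa using metricDim_PIS_eq_of_ringEquiv_pi e h2 (hn.imp Fin.nontrivial_iff_two_le.2 And.right)
end
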